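/- arXiv:2502.07756 — 8 statements merged into one kernel-verified Lean document; each statement's English description precedes it below -/
import Mathlib

section
/- Let n be a natural number. Let α : Fin n → ℍ be a family of imaginary quaternions (re(α a) = 0 for all a), and let β : Fin n → Fin n → ℍ be antisymmetric (β b a = −β a b) with imaginary values (re(β a b) = 0 for all a, b). For indices a, b, c define ω a b c := re(α a * β b c) − re(α b * β a c) + re(α c * β a b). Then ∑_{a < b < c} (ω a b c)^2 ≤ (∑_a ‖α a‖^2) · (∑_{a < b} ‖β a b‖^2). (This is the coordinate form of the pointwise bound |Re(d_AΦ ∧ F_A)| ≤ |d_AΦ||F_A| for su(2)-valued forms, where the norms on forms are the Euclidean norms computed in an orthonormal basis.) -/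
open Finset

private theorem su2aux_pair_sum_eq {n : ℕ} (h : Fin n → Fin n → ℝ)
    (hsymm : ∀ a b, h a b = h b a) (hdiag : ∀ a, h a a = 0) :
    ∑ a, ∑ b, h a b = 2 * ∑ a, ∑ b, (if a < b then h a b else 0) := by
  have key : ∀ a b : Fin n, h a b =
      (if a < b then h a b else 0) + (if b < a then h a b else 0) := by
    intro a b
    rcases lt_trichotomy a b with h1 | h1 | h1
    · simp [h1, lt_asymm h1]
    · subst h1; simp [hdiag, lt_irrefl]
    · simp [h1, lt_asymm h1]
  calc ∑ a, ∑ b, h a b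
      = ∑ a, ∑ b, ((if a < b then h a b else 0) + (if b < a then h a b else 0)) :=
        Finset.sum_congr rfl fun a _ => Finset.sum_congr rfl fun b _ => key a b
    _ = (∑ a, ∑ b, (if a < b then h a b else 0))
        + ∑ a, ∑ b, (if b < a then h a b else 0) := by
        simp only [Finset.sum_add_distrib]
    _ = (∑ a, ∑ b, (if a < b then h a b else 0))
        + ∑ a, ∑ b, (if a < b then h b a else 0) := by
        rw [Finset.sum_comm (f := fun a b => if b < a then h a b else 0)]
    _ = 2 * ∑ a, ∑ b, (if a < b then h a b else 0) := by
        have e : ∀ a b : Fin n, (if a < b then h b a else 0) = (if a < b then h a b else 0) :=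
          fun a b => by rw [hsymm b a]
        rw [Finset.sum_congr rfl fun a _ => Finset.sum_congr rfl fun b _ => e a b]
        ring

private theorem su2aux_triple_sum_eq {n : ℕ} (W : Fin n → Fin n → Fin n → ℝ)
    (h12 : ∀ a b c, W b a c = W a b c)
    (h23 : ∀ a b c, W a c b = W a b c)
    (hd12 : ∀ a c, W a a c = 0)
    (hd23 : ∀ a b, W a b b = 0) :
    ∑ a, ∑ b, ∑ c, W a b c
      = 6 * ∑ a, ∑ b, ∑ c, (if a < b ∧ b < c then W a b c else 0) := by
  have hd13 : ∀ a b : Fin n, W a b a = 0 := fun a b => by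
    rw [← h23 a b a]; exact hd12 a b
  have key : ∀ a b c : Fin n, W a b c =
      (if a < b ∧ b < c then W a b c else 0) + (if a < c ∧ c < b then W a b c else 0)
      + (if b < a ∧ a < c then W a b c else 0) + (if b < c ∧ c < a then W a b c else 0)
      + (if c < a ∧ a < b then W a b c else 0) + (if c < b ∧ b < a then W a b c else 0) := by
    intro a b c
    by_cases hab : a = b
    · subst hab; simp [hd12, lt_irrefl]
    by_cases hbc : b = c
    · subst hbc; simp [hd23, lt_irrefl]
    by_cases hac : a = c
    · subst hac; simp [hd13, lt_irrefl]
    rcases lt_trichotomy a b with h1 | h1 | h1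
    · rcases lt_trichotomy b c with h2 | h2 | h2
      · have h3 : a < c := h1.trans h2
        simp [h1, h2, h3, lt_asymm h1, lt_asymm h2, lt_asymm h3]
      · exact absurd h2 hbc
      · rcases lt_trichotomy a c with h3 | h3 | h3
        · simp [h1, h2, h3, lt_asymm h1, lt_asymm h2, lt_asymm h3]
        · exact absurd h3 hac
        · simp [h1, h2, h3, lt_asymm h1, lt_asymm h2, lt_asymm h3]
    · exact absurd h1 hab
    · rcases lt_trichotomy a c with h3 | h3 | h3
      · have h2 : b < c := h1.trans h3
        simp [h1, h2, h3, lt_asymm h1, lt_asymm h2, lt_asymm h3]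
      · exact absurd h3 hac
      · rcases lt_trichotomy b c with h2 | h2 | h2
        · simp [h1, h2, h3, lt_asymm h1, lt_asymm h2, lt_asymm h3]
        · exact absurd h2 hbc
        · simp [h1, h2, h3, lt_asymm h1, lt_asymm h2, lt_asymm h3]
  have t2 : (∑ a, ∑ b, ∑ c, if a < c ∧ c < b then W a b c else 0)
      = ∑ a, ∑ b, ∑ c, (if a < b ∧ b < c then W a b c else 0) := by
    calc (∑ a, ∑ b, ∑ c, if a < c ∧ c < b then W a b c else 0)
        = ∑ a, ∑ c, ∑ b, (if a < c ∧ c < b then W a b c else 0) :=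
          Finset.sum_congr rfl fun a _ => Finset.sum_comm
      _ = ∑ a, ∑ b, ∑ c, (if a < b ∧ b < c then W a b c else 0) :=
          Finset.sum_congr rfl fun a _ => Finset.sum_congr rfl fun b _ =>
            Finset.sum_congr rfl fun c _ => by rw [h23]
  have t3 : (∑ a, ∑ b, ∑ c, if b < a ∧ a < c then W a b c else 0)
      = ∑ a, ∑ b, ∑ c, (if a < b ∧ b < c then W a b c else 0) := by
    calc (∑ a, ∑ b, ∑ c, if b < a ∧ a < c then W a b c else 0)
        = ∑ b, ∑ a, ∑ c, (if b < a ∧ a < c then W a b c else 0) := Finset.sum_comm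
      _ = ∑ a, ∑ b, ∑ c, (if a < b ∧ b < c then W a b c else 0) :=
          Finset.sum_congr rfl fun a _ => Finset.sum_congr rfl fun b _ =>
            Finset.sum_congr rfl fun c _ => by rw [h12]
  have t4 : (∑ a, ∑ b, ∑ c, if b < c ∧ c < a then W a b c else 0)
      = ∑ a, ∑ b, ∑ c, (if a < b ∧ b < c then W a b c else 0) := by
    calc (∑ a, ∑ b, ∑ c, if b < c ∧ c < a then W a b c else 0)
        = ∑ b, ∑ a, ∑ c, (if b < c ∧ c < a then W a b c else 0) := Finset.sum_comm
      _ = ∑ b, ∑ c, ∑ a, (if b < c ∧ c < a then W a b c else 0) :=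
          Finset.sum_congr rfl fun b _ => Finset.sum_comm
      _ = ∑ a, ∑ b, ∑ c, (if a < b ∧ b < c then W a b c else 0) :=
          Finset.sum_congr rfl fun a _ => Finset.sum_congr rfl fun b _ =>
            Finset.sum_congr rfl fun c _ => by rw [h12, h23]
  have t5 : (∑ a, ∑ b, ∑ c, if c < a ∧ a < b then W a b c else 0)
      = ∑ a, ∑ b, ∑ c, (if a < b ∧ b < c then W a b c else 0) := by
    calc (∑ a, ∑ b, ∑ c, if c < a ∧ a < b then W a b c else 0)
        = ∑ a, ∑ c, ∑ b, (if c < a ∧ a < b then W a b c else 0) :=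
          Finset.sum_congr rfl fun a _ => Finset.sum_comm
      _ = ∑ c, ∑ a, ∑ b, (if c < a ∧ a < b then W a b c else 0) := Finset.sum_comm
      _ = ∑ a, ∑ b, ∑ c, (if a < b ∧ b < c then W a b c else 0) :=
          Finset.sum_congr rfl fun a _ => Finset.sum_congr rfl fun b _ =>
            Finset.sum_congr rfl fun c _ => by rw [h23, h12]
  have t6 : (∑ a, ∑ b, ∑ c, if c < b ∧ b < a then W a b c else 0)
      = ∑ a, ∑ b, ∑ c, (if a < b ∧ b < c then W a b c else 0) := by
    calc (∑ a, ∑ b, ∑ c, if c < b ∧ b < a then W a b c else 0)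
        = ∑ a, ∑ c, ∑ b, (if c < b ∧ b < a then W a b c else 0) :=
          Finset.sum_congr rfl fun a _ => Finset.sum_comm
      _ = ∑ c, ∑ a, ∑ b, (if c < b ∧ b < a then W a b c else 0) := Finset.sum_comm
      _ = ∑ c, ∑ b, ∑ a, (if c < b ∧ b < a then W a b c else 0) :=
          Finset.sum_congr rfl fun c _ => Finset.sum_comm
      _ = ∑ a, ∑ b, ∑ c, (if a < b ∧ b < c then W a b c else 0) :=
          Finset.sum_congr rfl fun a _ => Finset.sum_congr rfl fun b _ =>
            Finset.sum_congr rfl fun c _ => by rw [h12, h23, h12]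
  calc ∑ a, ∑ b, ∑ c, W a b c
      = ∑ a, ∑ b, ∑ c, ((if a < b ∧ b < c then W a b c else 0)
        + (if a < c ∧ c < b then W a b c else 0)
        + (if b < a ∧ a < c then W a b c else 0) + (if b < c ∧ c < a then W a b c else 0)
        + (if c < a ∧ a < b then W a b c else 0) + (if c < b ∧ b < a then W a b c else 0)) :=
        Finset.sum_congr rfl fun a _ => Finset.sum_congr rfl fun b _ =>
          Finset.sum_congr rfl fun c _ => key a b c
    _ = (∑ a, ∑ b, ∑ c, (if a < b ∧ b < c then W a b c else 0))
        + (∑ a, ∑ b, ∑ c, (if a < c ∧ c < b then W a b c else 0))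
        + (∑ a, ∑ b, ∑ c, (if b < a ∧ a < c then W a b c else 0))
        + (∑ a, ∑ b, ∑ c, (if b < c ∧ c < a then W a b c else 0))
        + (∑ a, ∑ b, ∑ c, (if c < a ∧ a < b then W a b c else 0))
        + (∑ a, ∑ b, ∑ c, (if c < b ∧ b < a then W a b c else 0)) := by
        simp only [Finset.sum_add_distrib]
    _ = 6 * ∑ a, ∑ b, ∑ c, (if a < b ∧ b < c then W a b c else 0) := by
        rw [t2, t3, t4, t5, t6]; ring

private theorem su2aux_cube_identity {n : ℕ} (f : Fin n → ℝ) (g : Fin n → Fin n → ℝ)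
    (hg : ∀ a b, g b a = - g a b) :
    ∑ a, ∑ b, ∑ c, (f a * g b c - f b * g a c + f c * g a b)^2
      = 3 * (∑ a, (f a)^2) * (∑ a, ∑ b, (g a b)^2)
        - 6 * ∑ c, (∑ a, f a * g a c)^2 := by
  have expand : ∀ a b c : Fin n, (f a * g b c - f b * g a c + f c * g a b)^2
      = (f a)^2*(g b c)^2 + ((f b)^2*(g a c)^2 + (f c)^2*(g a b)^2)
        - (2*((f a*g a c)*(f b*g b c)) + (2*((f a*g a b)*(f c*g c b))
          + 2*((f b*g b a)*(f c*g c a)))) := by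
    intro a b c
    rw [hg b c, hg a b, hg a c]
    ring
  have hA2 : ∑ a, ∑ b, ∑ c, (f b)^2*(g a c)^2 = ∑ a, ∑ b, ∑ c, (f a)^2*(g b c)^2 :=
    Finset.sum_comm
  have hA3 : ∑ a, ∑ b, ∑ c, (f c)^2*(g a b)^2 = ∑ a, ∑ b, ∑ c, (f a)^2*(g b c)^2 :=
    (Finset.sum_congr rfl fun a _ => Finset.sum_comm).trans Finset.sum_comm
  have hB2 : ∑ a, ∑ b, ∑ c, (f a*g a b)*(f c*g c b)
      = ∑ a, ∑ b, ∑ c, (f a*g a c)*(f b*g b c) :=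
    Finset.sum_congr rfl fun a _ => Finset.sum_comm
  have hB3 : ∑ a, ∑ b, ∑ c, (f b*g b a)*(f c*g c a)
      = ∑ a, ∑ b, ∑ c, (f a*g a c)*(f b*g b c) :=
    Finset.sum_comm.trans (Finset.sum_congr rfl fun b _ => Finset.sum_comm)
  have hR : ∑ c, (∑ a, f a * g a c)^2 = ∑ a, ∑ b, ∑ c, (f a*g a c)*(f b*g b c) := by
    have e : ∀ c : Fin n, (∑ a, f a * g a c)^2
        = ∑ a, ∑ b, (f a*g a c)*(f b*g b c) := by
      intro c; rw [sq, Finset.sum_mul_sum]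
    rw [Finset.sum_congr rfl fun c _ => e c]
    exact Finset.sum_comm.trans (Finset.sum_congr rfl fun a _ => Finset.sum_comm)
  have hFH : (∑ a, (f a)^2) * (∑ a, ∑ b, (g a b)^2)
      = ∑ a, ∑ b, ∑ c, (f a)^2*(g b c)^2 := by
    rw [Finset.sum_mul_sum]
    exact Finset.sum_congr rfl fun a _ => Finset.sum_congr rfl fun b _ => Finset.mul_sum _ _ _
  calc ∑ a, ∑ b, ∑ c, (f a * g b c - f b * g a c + f c * g a b)^2
      = ∑ a, ∑ b, ∑ c, ((f a)^2*(g b c)^2 + ((f b)^2*(g a c)^2 + (f c)^2*(g a b)^2)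
        - (2*((f a*g a c)*(f b*g b c)) + (2*((f a*g a b)*(f c*g c b))
          + 2*((f b*g b a)*(f c*g c a))))) :=
        Finset.sum_congr rfl fun a _ => Finset.sum_congr rfl fun b _ =>
          Finset.sum_congr rfl fun c _ => expand a b c
    _ = (∑ a, ∑ b, ∑ c, (f a)^2*(g b c)^2) + ((∑ a, ∑ b, ∑ c, (f b)^2*(g a c)^2)
          + ∑ a, ∑ b, ∑ c, (f c)^2*(g a b)^2)
        - (2*(∑ a, ∑ b, ∑ c, (f a*g a c)*(f b*g b c))
          + (2*(∑ a, ∑ b, ∑ c, (f a*g a b)*(f c*g c b))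
          + 2*(∑ a, ∑ b, ∑ c, (f b*g b a)*(f c*g c a)))) := by
        simp only [Finset.sum_add_distrib, Finset.sum_sub_distrib, ← Finset.mul_sum]
    _ = _ := by rw [hA2, hA3, hB2, hB3, hR]; linear_combination (-3)*hFH

private theorem su2aux_ordered_key {n : ℕ} (f : Fin n → ℝ) (g : Fin n → Fin n → ℝ)
    (hg : ∀ a b, g b a = - g a b) :
    ∑ a, ∑ b, ∑ c, (if a < b ∧ b < c
        then (f a * g b c - f b * g a c + f c * g a b)^2 else 0)
      ≤ (∑ a, (f a)^2) * ∑ a, ∑ b, (if a < b then (g a b)^2 else 0) := by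
  have hgd : ∀ a, g a a = 0 := fun a => by have := hg a a; linarith
  have htri := su2aux_triple_sum_eq (fun a b c => (f a * g b c - f b * g a c + f c * g a b)^2)
    (fun a b c => by beta_reduce; rw [hg a b]; ring)
    (fun a b c => by beta_reduce; rw [hg b c]; ring)
    (fun a c => by beta_reduce; rw [hgd a]; ring)
    (fun a b => by beta_reduce; rw [hgd b]; ring)
  have hpair := su2aux_pair_sum_eq (fun a b => (g a b)^2)
    (fun a b => by beta_reduce; rw [hg a b]; ring)
    (fun a => by beta_reduce; rw [hgd a]; ring)
  have hid := su2aux_cube_identity f g hg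
  have hRnn : (0:ℝ) ≤ ∑ c, (∑ a, f a * g a c)^2 :=
    Finset.sum_nonneg fun c _ => sq_nonneg _
  have h6 : 6 * (∑ a, ∑ b, ∑ c, (if a < b ∧ b < c
        then (f a * g b c - f b * g a c + f c * g a b)^2 else 0))
      = 6 * ((∑ a, (f a)^2) * ∑ a, ∑ b, (if a < b then (g a b)^2 else 0))
        - 6 * ∑ c, (∑ a, f a * g a c)^2 := by
    linear_combination (-1)*htri + hid + (3*(∑ a, (f a)^2))*hpair
  linarith

private theorem su2aux_triple_prod {n : ℕ} (F : Fin n → Fin n → Fin n → ℝ) :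
    ∑ x : Fin n × Fin n × Fin n, F x.1 x.2.1 x.2.2 = ∑ a, ∑ b, ∑ c, F a b c := by
  rw [Fintype.sum_prod_type]
  refine Finset.sum_congr rfl fun a _ => ?_
  exact Fintype.sum_prod_type (f := fun y => F a y.1 y.2)

private theorem su2aux_sq_sum_le {ι : Type*} [Fintype ι] (v1 v2 v3 : ι → ℝ)
    (F1 F2 F3 G1 G2 G3 : ℝ)
    (h1 : ∑ x, (v1 x)^2 ≤ F1*G1) (h2 : ∑ x, (v2 x)^2 ≤ F2*G2) (h3 : ∑ x, (v3 x)^2 ≤ F3*G3)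
    (hF1 : 0 ≤ F1) (hF2 : 0 ≤ F2) (hF3 : 0 ≤ F3)
    (hG1 : 0 ≤ G1) (hG2 : 0 ≤ G2) (hG3 : 0 ≤ G3) :
    ∑ x, (v1 x + v2 x + v3 x)^2 ≤ (F1+F2+F3)*(G1+G2+G3) := by
  have step : ∀ C Ti Tj Fi Gi Fj Gj : ℝ, C^2 ≤ Ti*Tj → Ti ≤ Fi*Gi → Tj ≤ Fj*Gj →
      0 ≤ Ti → 0 ≤ Tj → 0 ≤ Fi → 0 ≤ Gi → 0 ≤ Fj → 0 ≤ Gj →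
      2*C ≤ Fi*Gj + Fj*Gi := by
    intro C Ti Tj Fi Gi Fj Gj hC hi hj hTi hTj hFi hGi hFj hGj
    nlinarith [sq_nonneg (Fi*Gj - Fj*Gi), mul_nonneg hFi hGi, mul_nonneg hFj hGj,
      mul_le_mul hi hj hTj (mul_nonneg hFi hGi),
      add_nonneg (mul_nonneg hFi hGj) (mul_nonneg hFj hGi)]
  have c12 := Finset.sum_mul_sq_le_sq_mul_sq Finset.univ v1 v2
  have c13 := Finset.sum_mul_sq_le_sq_mul_sq Finset.univ v1 v3
  have c23 := Finset.sum_mul_sq_le_sq_mul_sq Finset.univ v2 v3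
  have t1 : (0:ℝ) ≤ ∑ x, (v1 x)^2 := Finset.sum_nonneg fun x _ => sq_nonneg _
  have t2 : (0:ℝ) ≤ ∑ x, (v2 x)^2 := Finset.sum_nonneg fun x _ => sq_nonneg _
  have t3 : (0:ℝ) ≤ ∑ x, (v3 x)^2 := Finset.sum_nonneg fun x _ => sq_nonneg _
  have s12 := step _ _ _ _ _ _ _ c12 h1 h2 t1 t2 hF1 hG1 hF2 hG2
  have s13 := step _ _ _ _ _ _ _ c13 h1 h3 t1 t3 hF1 hG1 hF3 hG3
  have s23 := step _ _ _ _ _ _ _ c23 h2 h3 t2 t3 hF2 hG2 hF3 hG3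
  have e : ∑ x, (v1 x + v2 x + v3 x)^2
      = (∑ x, (v1 x)^2) + (∑ x, (v2 x)^2) + (∑ x, (v3 x)^2)
        + (2*(∑ x, v1 x * v2 x) + 2*(∑ x, v1 x * v3 x) + 2*(∑ x, v2 x * v3 x)) := by
    rw [Finset.sum_congr rfl fun x _ => (by ring :
      (v1 x + v2 x + v3 x)^2 = (v1 x)^2 + ((v2 x)^2 + ((v3 x)^2
        + (2*(v1 x * v2 x) + (2*(v1 x * v3 x) + 2*(v2 x * v3 x))))))]
    simp only [Finset.sum_add_distrib, ← Finset.mul_sum]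
    ring
  have hexp : (F1+F2+F3)*(G1+G2+G3)
      = F1*G1+F2*G2+F3*G3 + ((F1*G2+F2*G1) + (F1*G3+F3*G1) + (F2*G3+F3*G2)) := by ring
  linarith

private theorem su2aux_combine {n : ℕ} (f1 f2 f3 : Fin n → ℝ) (g1 g2 g3 : Fin n → Fin n → ℝ)
    (hg1 : ∀ a b, g1 b a = - g1 a b) (hg2 : ∀ a b, g2 b a = - g2 a b)
    (hg3 : ∀ a b, g3 b a = - g3 a b) :
    ∑ a, ∑ b, ∑ c, (if a < b ∧ b < c then
        ((f1 a * g1 b c - f1 b * g1 a c + f1 c * g1 a b)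
          + (f2 a * g2 b c - f2 b * g2 a c + f2 c * g2 a b)
          + (f3 a * g3 b c - f3 b * g3 a c + f3 c * g3 a b))^2 else 0)
      ≤ (∑ a, ((f1 a)^2 + (f2 a)^2 + (f3 a)^2))
        * ∑ a, ∑ b, (if a < b then ((g1 a b)^2 + (g2 a b)^2 + (g3 a b)^2) else 0) := by
  have hL : ∑ a, ∑ b, ∑ c, (if a < b ∧ b < c then
        ((f1 a * g1 b c - f1 b * g1 a c + f1 c * g1 a b)
          + (f2 a * g2 b c - f2 b * g2 a c + f2 c * g2 a b)
          + (f3 a * g3 b c - f3 b * g3 a c + f3 c * g3 a b))^2 else 0)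
      = ∑ x : Fin n × Fin n × Fin n,
          ((if x.1 < x.2.1 ∧ x.2.1 < x.2.2 then
              (f1 x.1 * g1 x.2.1 x.2.2 - f1 x.2.1 * g1 x.1 x.2.2 + f1 x.2.2 * g1 x.1 x.2.1)
            else 0)
          + (if x.1 < x.2.1 ∧ x.2.1 < x.2.2 then
              (f2 x.1 * g2 x.2.1 x.2.2 - f2 x.2.1 * g2 x.1 x.2.2 + f2 x.2.2 * g2 x.1 x.2.1)
            else 0)
          + (if x.1 < x.2.1 ∧ x.2.1 < x.2.2 then
              (f3 x.1 * g3 x.2.1 x.2.2 - f3 x.2.1 * g3 x.1 x.2.2 + f3 x.2.2 * g3 x.1 x.2.1)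
            else 0))^2 := by
    rw [su2aux_triple_prod (F := fun a b c =>
      ((if a < b ∧ b < c then
          (f1 a * g1 b c - f1 b * g1 a c + f1 c * g1 a b) else 0)
        + (if a < b ∧ b < c then
          (f2 a * g2 b c - f2 b * g2 a c + f2 c * g2 a b) else 0)
        + (if a < b ∧ b < c then
          (f3 a * g3 b c - f3 b * g3 a c + f3 c * g3 a b) else 0))^2)]
    refine Finset.sum_congr rfl fun a _ => Finset.sum_congr rfl fun b _ =>
      Finset.sum_congr rfl fun c _ => ?_
    split_ifs <;> ring
  rw [hL]
  have hT : ∀ (f : Fin n → ℝ) (g : Fin n → Fin n → ℝ), (∀ a b, g b a = - g a b) →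
      ∑ x : Fin n × Fin n × Fin n,
        (if x.1 < x.2.1 ∧ x.2.1 < x.2.2 then
            (f x.1 * g x.2.1 x.2.2 - f x.2.1 * g x.1 x.2.2 + f x.2.2 * g x.1 x.2.1)
          else 0)^2
      ≤ (∑ a, (f a)^2) * ∑ a, ∑ b, (if a < b then (g a b)^2 else 0) := by
    intro f g hg
    have e : ∑ x : Fin n × Fin n × Fin n,
        (if x.1 < x.2.1 ∧ x.2.1 < x.2.2 then
            (f x.1 * g x.2.1 x.2.2 - f x.2.1 * g x.1 x.2.2 + f x.2.2 * g x.1 x.2.1)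
          else 0)^2
        = ∑ a, ∑ b, ∑ c, (if a < b ∧ b < c
            then (f a * g b c - f b * g a c + f c * g a b)^2 else 0) := by
      rw [show (fun (x : Fin n × Fin n × Fin n) =>
        (if x.1 < x.2.1 ∧ x.2.1 < x.2.2 then
            (f x.1 * g x.2.1 x.2.2 - f x.2.1 * g x.1 x.2.2 + f x.2.2 * g x.1 x.2.1)
          else 0)^2)
        = fun x => (if x.1 < x.2.1 ∧ x.2.1 < x.2.2 then
            (f x.1 * g x.2.1 x.2.2 - f x.2.1 * g x.1 x.2.2 + f x.2.2 * g x.1 x.2.1)^2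
          else 0) from funext fun x => by split_ifs <;> ring]
      exact su2aux_triple_prod (F := fun a b c => (if a < b ∧ b < c
        then (f a * g b c - f b * g a c + f c * g a b)^2 else 0))
    rw [e]
    exact su2aux_ordered_key f g hg
  have hF : ∀ f : Fin n → ℝ, (0:ℝ) ≤ ∑ a, (f a)^2 :=
    fun f => Finset.sum_nonneg fun a _ => sq_nonneg _
  have hG : ∀ g : Fin n → Fin n → ℝ, (0:ℝ) ≤ ∑ a, ∑ b, (if a < b then (g a b)^2 else 0) :=
    fun g => Finset.sum_nonneg fun a _ => Finset.sum_nonneg fun b _ => by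
      split_ifs <;> positivity
  have main := su2aux_sq_sum_le
    (fun x : Fin n × Fin n × Fin n => if x.1 < x.2.1 ∧ x.2.1 < x.2.2 then
        (f1 x.1 * g1 x.2.1 x.2.2 - f1 x.2.1 * g1 x.1 x.2.2 + f1 x.2.2 * g1 x.1 x.2.1) else 0)
    (fun x : Fin n × Fin n × Fin n => if x.1 < x.2.1 ∧ x.2.1 < x.2.2 then
        (f2 x.1 * g2 x.2.1 x.2.2 - f2 x.2.1 * g2 x.1 x.2.2 + f2 x.2.2 * g2 x.1 x.2.1) else 0)
    (fun x : Fin n × Fin n × Fin n => if x.1 < x.2.1 ∧ x.2.1 < x.2.2 then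
        (f3 x.1 * g3 x.2.1 x.2.2 - f3 x.2.1 * g3 x.1 x.2.2 + f3 x.2.2 * g3 x.1 x.2.1) else 0)
    _ _ _ _ _ _ (hT f1 g1 hg1) (hT f2 g2 hg2) (hT f3 g3 hg3)
    (hF f1) (hF f2) (hF f3) (hG g1) (hG g2) (hG g3)
  refine le_trans main (le_of_eq ?_)
  rw [Finset.sum_add_distrib, Finset.sum_add_distrib]
  have e2 : ∀ a b : Fin n, (if a < b then ((g1 a b)^2 + (g2 a b)^2 + (g3 a b)^2) else 0)
      = (if a < b then (g1 a b)^2 else 0) + (if a < b then (g2 a b)^2 else 0)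
        + (if a < b then (g3 a b)^2 else 0) := by
    intro a b; split_ifs <;> ring
  rw [Finset.sum_congr rfl fun a (_ : a ∈ Finset.univ) =>
    Finset.sum_congr rfl fun b _ => e2 a b]
  simp only [Finset.sum_add_distrib]

/-- Coordinate form of the pointwise bound `|Re(d_AΦ ∧ F_A)| ≤ |d_AΦ||F_A|` for
`su(2)`-valued forms: given imaginary quaternion coefficients `α a` of a one-form and
antisymmetric imaginary coefficients `β a b` of a two-form, the Euclidean norm squared of
the real three-form with components `ω a b c = re(α a β b c) − re(α b β a c) + re(α c β a b)`
is bounded by the product of the norms squared. -/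
theorem su2_wedge_real_part_bound (n : ℕ) (α : Fin n → Quaternion ℝ)
    (β : Fin n → Fin n → Quaternion ℝ)
    (hα : ∀ a, (α a).re = 0)
    (hβanti : ∀ a b, β b a = -β a b)
    (hβim : ∀ a b, (β a b).re = 0) :
    (∑ a : Fin n, ∑ b ∈ Finset.univ.filter (fun b => a < b),
        ∑ c ∈ Finset.univ.filter (fun c => b < c),
          ((α a * β b c).re - (α b * β a c).re + (α c * β a b).re) ^ 2)
      ≤ (∑ a : Fin n, ‖α a‖ ^ 2) *
        (∑ a : Fin n, ∑ b ∈ Finset.univ.filter (fun b => a < b), ‖β a b‖ ^ 2) := by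
  have hg1 : ∀ a b, (β b a).imI = -(β a b).imI := fun a b => by rw [hβanti a b]; simp
  have hg2 : ∀ a b, (β b a).imJ = -(β a b).imJ := fun a b => by rw [hβanti a b]; simp
  have hg3 : ∀ a b, (β b a).imK = -(β a b).imK := fun a b => by rw [hβanti a b]; simp
  have hpt : ∀ a b c : Fin n,
      ((α a * β b c).re - (α b * β a c).re + (α c * β a b).re) ^ 2
      = (((α a).imI * (β b c).imI - (α b).imI * (β a c).imI + (α c).imI * (β a b).imI)
        + ((α a).imJ * (β b c).imJ - (α b).imJ * (β a c).imJ + (α c).imJ * (β a b).imJ)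
        + ((α a).imK * (β b c).imK - (α b).imK * (β a c).imK + (α c).imK * (β a b).imK))^2 := by
    intro a b c
    simp only [Quaternion.re_mul, hα, hβim]
    ring
  have hiteswap : ∀ (P : Prop) [Decidable P] (F : Fin n → ℝ),
      (if P then (∑ c, F c) else 0) = ∑ c, (if P then F c else 0) := by
    intro P _ F; split_ifs <;> simp
  have hnα : ∀ a, ‖α a‖^2 = (α a).imI^2 + (α a).imJ^2 + (α a).imK^2 := by
    intro a
    rw [sq, ← Quaternion.normSq_eq_norm_mul_self, Quaternion.normSq_def', hα]; ring
  have hnβ : ∀ a b, ‖β a b‖^2 = (β a b).imI^2 + (β a b).imJ^2 + (β a b).imK^2 := by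
    intro a b
    rw [sq, ← Quaternion.normSq_eq_norm_mul_self, Quaternion.normSq_def', hβim]; ring
  calc (∑ a : Fin n, ∑ b ∈ Finset.univ.filter (fun b => a < b),
        ∑ c ∈ Finset.univ.filter (fun c => b < c),
          ((α a * β b c).re - (α b * β a c).re + (α c * β a b).re) ^ 2)
      = ∑ a, ∑ b, ∑ c, (if a < b ∧ b < c then
          (((α a).imI * (β b c).imI - (α b).imI * (β a c).imI + (α c).imI * (β a b).imI)
          + ((α a).imJ * (β b c).imJ - (α b).imJ * (β a c).imJ + (α c).imJ * (β a b).imJ)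
          + ((α a).imK * (β b c).imK - (α b).imK * (β a c).imK
              + (α c).imK * (β a b).imK))^2 else 0) := by
        simp only [Finset.sum_filter]
        refine Finset.sum_congr rfl fun a _ => Finset.sum_congr rfl fun b _ => ?_
        rw [hiteswap]
        refine Finset.sum_congr rfl fun c _ => ?_
        rw [ite_and, hpt a b c]
    _ ≤ (∑ a, (((α a).imI)^2 + ((α a).imJ)^2 + ((α a).imK)^2))
        * ∑ a, ∑ b, (if a < b then
            (((β a b).imI)^2 + ((β a b).imJ)^2 + ((β a b).imK)^2) else 0) :=
        su2aux_combine (fun a => (α a).imI) (fun a => (α a).imJ) (fun a => (α a).imK)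
          (fun a b => (β a b).imI) (fun a b => (β a b).imJ) (fun a b => (β a b).imK)
          hg1 hg2 hg3
    _ = (∑ a : Fin n, ‖α a‖ ^ 2) *
        (∑ a : Fin n, ∑ b ∈ Finset.univ.filter (fun b => a < b), ‖β a b‖ ^ 2) := by
        congr 1
        · exact (Finset.sum_congr rfl fun a _ => (hnα a).symm)
        · simp only [Finset.sum_filter]
          refine Finset.sum_congr rfl fun a _ => Finset.sum_congr rfl fun b _ => ?_
          by_cases h : a < b <;> simp [h, hnβ a b]
end

section
/- Let α, γ : Fin 3 → ℍ be triples of imaginary quaternions (re(α a) = 0 and re(γ a) = 0 for all a). Then ∑_{a < b} (re(α a * γ b) − re(α b * γ a))^2 ≤ (∑_a ‖α a‖^2) · (∑_b ‖γ b‖^2). -/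
/-!
Put `M a b = ⟨α a, γ b⟩ = -re (α a * γ b)` and let `p k`, `q k` be the imaginary quaternions
whose coordinates are the `k`-th columns of the coordinate matrices of `α` and `γ`. Since
`im (p * q) = p × q` for imaginary `p, q`, the imaginary part of `T = ∑ k, p k * q k` has the
coordinates `M a b - M b a`, `a < b`, so the left-hand side is
`‖im T‖² ≤ ‖T‖² ≤ (∑ ‖p k‖ ‖q k‖)² ≤ (∑ ‖p k‖²)(∑ ‖q k‖²)`, and transposing a matrix preserves
its Frobenius norm.
-/

open Quaternion

theorem norm_sum_mul_sq_le {ι R : Type*} [SeminormedRing R] (s : Finset ι) (p q : ι → R) :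
    ‖∑ i ∈ s, p i * q i‖ ^ 2 ≤ (∑ i ∈ s, ‖p i‖ ^ 2) * ∑ i ∈ s, ‖q i‖ ^ 2 := by
  have htri : ‖∑ i ∈ s, p i * q i‖ ≤ ∑ i ∈ s, ‖p i‖ * ‖q i‖ :=
    (norm_sum_le _ _).trans (Finset.sum_le_sum fun i _ => norm_mul_le _ _)
  calc ‖∑ i ∈ s, p i * q i‖ ^ 2 ≤ (∑ i ∈ s, ‖p i‖ * ‖q i‖) ^ 2 := by gcongr
    _ ≤ _ := Finset.sum_mul_sq_le_sq_mul_sq _ _ _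

namespace Quaternion

theorem normSq_im_le (q : ℍ) : normSq q.im ≤ normSq q := by
  simp only [normSq_def', re_im, imI_im, imJ_im, imK_im]
  nlinarith [sq_nonneg q.re]

def imTranspose (α : Fin 3 → ℍ) : Fin 3 → ℍ :=
  ![⟨0, (α 0).imI, (α 1).imI, (α 2).imI⟩, ⟨0, (α 0).imJ, (α 1).imJ, (α 2).imJ⟩,
    ⟨0, (α 0).imK, (α 1).imK, (α 2).imK⟩]

theorem sum_norm_sq_imTranspose {α : Fin 3 → ℍ} (hα : ∀ a, (α a).re = 0) :
    ∑ k, ‖imTranspose α k‖ ^ 2 = ∑ a, ‖α a‖ ^ 2 := by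
  simp only [sq, ← normSq_eq_norm_mul_self, Fin.sum_univ_three, normSq_def', hα]
  simp only [imTranspose, Matrix.cons_val]
  ring

theorem sum_sq_re_mul_sub_re_mul_eq {α γ : Fin 3 → ℍ} (hα : ∀ a, (α a).re = 0)
    (hγ : ∀ a, (γ a).re = 0) :
    ∑ a, ∑ b ∈ Finset.univ.filter (fun b => a < b), ((α a * γ b).re - (α b * γ a).re) ^ 2
      = normSq (∑ k, imTranspose α k * imTranspose γ k).im := by
  -- Expand the products before unfolding `imTranspose`: on its anonymous constructors the
  simp only [Finset.sum_filter, Fin.sum_univ_three, normSq_def', re_im, imI_im, imJ_im, imK_im,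
    imI_add, imJ_add, imK_add, re_mul, imI_mul, imJ_mul, imK_mul, hα, hγ]
  simp only [imTranspose, Matrix.cons_val, Fin.reduceLT, lt_self_iff_false, ↓reduceIte]
  ring

end Quaternion

/-- For triples `α, γ` of imaginary quaternions,
`∑_{a<b} (re(α a γ b) − re(α b γ a))² ≤ (∑ ‖α a‖²)(∑ ‖γ b‖²)`. -/
theorem su2_triple_real_part_bound (α γ : Fin 3 → Quaternion ℝ)
    (hα : ∀ a, (α a).re = 0) (hγ : ∀ a, (γ a).re = 0) :
    (∑ a : Fin 3, ∑ b ∈ Finset.univ.filter (fun b => a < b),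
        ((α a * γ b).re - (α b * γ a).re) ^ 2)
      ≤ (∑ a : Fin 3, ‖α a‖ ^ 2) * (∑ b : Fin 3, ‖γ b‖ ^ 2) := by
  set T := ∑ k, imTranspose α k * imTranspose γ k
  calc _ = normSq T.im := sum_sq_re_mul_sub_re_mul_eq hα hγ
    _ ≤ normSq T := normSq_im_le T
    _ = ‖T‖ ^ 2 := by rw [normSq_eq_norm_mul_self, sq]
    _ ≤ _ := norm_sum_mul_sq_le _ _ _
    _ = _ := by rw [sum_norm_sq_imTranspose hα, sum_norm_sq_imTranspose hγ]
end

section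
/- Let E be a real normed vector space, U ⊆ E an open set, and Φ : E → ℍ a map differentiable on U whose values are imaginary unit quaternions: re(Φ x) = 0 and ‖Φ x‖ = 1 for every x ∈ U. Let α : E → (E →L[ℝ] ℝ) be any family of real-valued continuous linear forms. For x ∈ U and v ∈ E define the connection one-form A x v := −(1/2) • (Φ x * (fderiv ℝ Φ x v)) + (α x v) • Φ x (equivalently A = (1/2) Φ^{-1} dΦ + Φ α, since Φ^{-1} = −Φ for a unit imaginary quaternion). Then the covariant derivative of Φ with respect to A vanishes: for every x ∈ U and v ∈ E, fderiv ℝ Φ x v + (A x v) * Φ x − Φ x * (A x v) = 0. -/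
/-!
A unit imaginary quaternion squares to `-1`, so `Φ * Φ = -1` near each point of `U`;
differentiating, `Φ` anticommutes with `dΦ`. Hence `[-½ Φ dΦ, Φ] = -½ (Φ dΦ Φ - Φ Φ dΦ) = -dΦ`,
while `[(α v) Φ, Φ] = 0`.
-/

open Filter Topology

theorem Quaternion.mul_self_eq_neg_one {q : Quaternion ℝ} (hre : q.re = 0) (hq : ‖q‖ = 1) :
    q * q = -1 := by
  rw [← sq, Quaternion.sq_eq_neg_normSq.mpr hre, Quaternion.normSq_eq_norm_mul_self, hq]
  simp

theorem mul_fderiv_add_fderiv_mul_eq_zero_of_mul_self_eventuallyEq {𝕜 E 𝔸 : Type*} [NontriviallyNormedField 𝕜]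
    [NormedAddCommGroup E] [NormedSpace 𝕜 E] [NormedRing 𝔸] [NormedAlgebra 𝕜 𝔸]
    {f : E → 𝔸} {x : E} {c : 𝔸} (hf : DifferentiableAt 𝕜 f x)
    (hc : (fun y => f y * f y) =ᶠ[𝓝 x] fun _ => c) (v : E) :
    f x * fderiv 𝕜 f x v + fderiv 𝕜 f x v * f x = 0 := by
  have h := congrArg (· v) (fderiv_fun_mul' hf hf)
  simpa [hc.fderiv_eq] using h.symm

theorem anticomm_add_mul_sub_mul_eq_zero {R : Type*} [Ring R] [Algebra ℝ R] {p d : R}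
    (hp : p * p = -1) (hpd : p * d + d * p = 0) (t : ℝ) :
    d + (-(1 / 2 : ℝ) • (p * d) + t • p) * p - p * (-(1 / 2 : ℝ) • (p * d) + t • p) = 0 := by
  have hpdp : p * d * p = d := by
    rw [eq_neg_of_add_eq_zero_left hpd, neg_mul, mul_assoc, hp]; simp
  have hppd : p * (p * d) = -d := by rw [← mul_assoc, hp]; simp
  simp only [add_mul, mul_add, smul_mul_assoc, mul_smul_comm, hpdp, hppd]
  module

/-- For a unit imaginary-quaternion-valued map `Φ` on an open set `U` and any real-valued
one-form `α`, the connection one-form `A = (1/2) Φ⁻¹ dΦ + Φ α = −(1/2) Φ dΦ + Φ α`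
satisfies `d_A Φ = 0`, i.e. `dΦ + [A, Φ] = 0`. -/
theorem covariant_deriv_vanishes {E : Type*} [NormedAddCommGroup E] [NormedSpace ℝ E]
    (U : Set E) (hU : IsOpen U) (Φ : E → Quaternion ℝ)
    (hΦdiff : ∀ x ∈ U, DifferentiableAt ℝ Φ x)
    (hΦim : ∀ x ∈ U, (Φ x).re = 0) (hΦunit : ∀ x ∈ U, ‖Φ x‖ = 1)
    (α : E → E →L[ℝ] ℝ)
    (A : E → E → Quaternion ℝ)
    (hA : ∀ x v, A x v = -(1 / 2 : ℝ) • (Φ x * fderiv ℝ Φ x v) + (α x v) • Φ x) :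
    ∀ x ∈ U, ∀ v : E, fderiv ℝ Φ x v + A x v * Φ x - Φ x * A x v = 0 := by
  intro x hx v
  have hsq : (fun y => Φ y * Φ y) =ᶠ[𝓝 x] fun _ => -1 := by
    filter_upwards [hU.mem_nhds hx] with y hy
    exact Quaternion.mul_self_eq_neg_one (hΦim y hy) (hΦunit y hy)
  rw [hA]
  exact anticomm_add_mul_sub_mul_eq_zero hsq.self_of_nhds
    (mul_fderiv_add_fderiv_mul_eq_zero_of_mul_self_eventuallyEq (hΦdiff x hx) hsq v) (α x v)
end

section
/- Let E be a real normed vector space, U ⊆ E open, and Φ : E → ℍ twice continuously differentiable on U with re(Φ x) = 0 and ‖Φ x‖ = 1 for every x ∈ U. Let α : E → (E →L[ℝ] ℝ) be continuously differentiable on U. Define A x v := −(1/2) • (Φ x * (fderiv ℝ Φ x v)) + (α x v) • Φ x, and define the curvature F x (v, w) := fderiv ℝ (fun y => A y w) x v − fderiv ℝ (fun y => A y v) x w + (A x v) * (A x w) − (A x w) * (A x v). Then for every x ∈ U and v, w ∈ E: F x (v, w) = −(1/4) • ((fderiv ℝ Φ x v) * (fderiv ℝ Φ x w) − (fderiv ℝ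 Φ x w) * (fderiv ℝ Φ x v)) + (fderiv ℝ (fun y => α y w) x v − fderiv ℝ (fun y => α y v) x w) • Φ x; that is, F_A = −(1/4) dΦ ∧ dΦ + Φ dα. -/
/-!
Differentiating `Φ * Φ = -1` shows that `Φ` anticommutes with each `dΦ(u)`, so `Φ dΦ(v)` and
`Φ dΦ(w)` multiply like `dΦ(v)` and `dΦ(w)`, and `Φ` conjugates each `dΦ(u)` to its negative.
In `dA(v, w)` the second-derivative terms cancel by symmetry of `D²Φ`, and the terms
`α(w) dΦ(v) - α(v) dΦ(w)` left over from the Leibniz rule are cancelled by the cross terms of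
`[A v, A w]`; what remains is `-(1/4) [dΦ(v), dΦ(w)] + dα(v, w) Φ`.
-/

open Filter Topology

theorem Quaternion.mul_self_eq_neg_one_of_re_eq_zero {q : Quaternion ℝ} (hre : q.re = 0)
    (hnorm : ‖q‖ = 1) : q * q = -1 := by
  rw [← sq, sq_eq_neg_normSq.mpr hre, normSq_eq_norm_mul_self, hnorm, mul_one,
    Quaternion.coe_one]

section Anticommute

variable {𝕜 E 𝔸 : Type*} [NontriviallyNormedField 𝕜] [NormedAddCommGroup E] [NormedSpace 𝕜 E]
  [NormedRing 𝔸] [NormedAlgebra 𝕜 𝔸]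

theorem mul_fderiv_eq_neg_fderiv_mul_of_eventually_mul_self_eq {f : E → 𝔸} {x : E} {c : 𝔸}
    (hf : DifferentiableAt 𝕜 f x) (hc : ∀ᶠ y in 𝓝 x, f y * f y = c) (u : E) :
    f x * fderiv 𝕜 f x u = -(fderiv 𝕜 f x u * f x) := by
  have h : fderiv 𝕜 (fun y => f y * f y) x = 0 := by
    rw [EventuallyEq.fderiv_eq (show (fun y => f y * f y) =ᶠ[𝓝 x] fun _ => c from hc),
      fderiv_const_apply]
  rw [fderiv_fun_mul' hf hf] at h
  simpa [eq_neg_iff_add_eq_zero] using congr($h u)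

end Anticommute

section Algebra

variable {R : Type*} [Ring R] [Algebra ℝ R]

theorem commutator_connection_values {q P Q : R} (a b : ℝ) (hq : q * q = -1)
    (hP : q * P = -(P * q)) (hQ : q * Q = -(Q * q)) :
    (-(1 / 2 : ℝ) • (q * P) + a • q) * (-(1 / 2 : ℝ) • (q * Q) + b • q)
        - (-(1 / 2 : ℝ) • (q * Q) + b • q) * (-(1 / 2 : ℝ) • (q * P) + a • q)
      = (1 / 4 : ℝ) • (P * Q - Q * P) - b • P + a • Q := by
  have hPQ : (q * P) * (q * Q) = P * Q := by
    rw [hP, neg_mul, mul_assoc, ← mul_assoc q q Q, hq, neg_one_mul, mul_neg, neg_neg]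
  have hQP : (q * Q) * (q * P) = Q * P := by
    rw [hQ, neg_mul, mul_assoc, ← mul_assoc q q P, hq, neg_one_mul, mul_neg, neg_neg]
  have hPq : (q * P) * q = P := by rw [hP, neg_mul, mul_assoc, hq, mul_neg_one, neg_neg]
  have hQq : (q * Q) * q = Q := by rw [hQ, neg_mul, mul_assoc, hq, mul_neg_one, neg_neg]
  have hqP : q * (q * P) = -P := by rw [← mul_assoc, hq, neg_one_mul]
  have hqQ : q * (q * Q) = -Q := by rw [← mul_assoc, hq, neg_one_mul]
  simp only [mul_add, add_mul, smul_mul_assoc, mul_smul_comm,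
    hPQ, hQP, hPq, hQq, hqP, hqQ, hq]
  module

end Algebra

noncomputable def connectionForm {E 𝔸 : Type*} [NormedAddCommGroup E] [NormedSpace ℝ E]
    [NormedRing 𝔸] [NormedAlgebra ℝ 𝔸] (Φ : E → 𝔸) (α : E → E →L[ℝ] ℝ) (x v : E) : 𝔸 :=
  -(1 / 2 : ℝ) • (Φ x * fderiv ℝ Φ x v) + α x v • Φ x

section Derivative

variable {E 𝔸 : Type*} [NormedAddCommGroup E] [NormedSpace ℝ E] [NormedRing 𝔸] [NormedAlgebra ℝ 𝔸]

theorem fderiv_connectionForm_apply {Φ : E → 𝔸} {α : E → E →L[ℝ] ℝ} {x : E}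
    (hΦ : DifferentiableAt ℝ Φ x) (hdΦ : DifferentiableAt ℝ (fderiv ℝ Φ) x)
    (hα : DifferentiableAt ℝ α x) (u v : E) :
    fderiv ℝ (fun y => connectionForm Φ α y u) x v =
      -(1 / 2 : ℝ) • (Φ x * fderiv ℝ (fderiv ℝ Φ) x v u + fderiv ℝ Φ x v * fderiv ℝ Φ x u)
        + (fderiv ℝ (fun y => α y u) x v • Φ x + α x u • fderiv ℝ Φ x v) := by
  have hdΦu : DifferentiableAt ℝ (fun y => fderiv ℝ Φ y u) x :=
    hdΦ.clm_apply (differentiableAt_const u)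
  have hαu : DifferentiableAt ℝ (fun y => α y u) x := hα.clm_apply (differentiableAt_const u)
  have h := ((hΦ.hasFDerivAt.mul' hdΦu.hasFDerivAt).const_smul (-(1 / 2 : ℝ))).add
    (hαu.hasFDerivAt.smul hΦ.hasFDerivAt)
  have hd2Φ : fderiv ℝ (fun y => fderiv ℝ Φ y u) x v = fderiv ℝ (fderiv ℝ Φ) x v u := by
    simp [fderiv_clm_apply hdΦ (differentiableAt_const u)]
  refine congr($(h.fderiv) v).trans ?_
  simp only [add_apply, smul_apply, smul_eq_mul, MulOpposite.smul_eq_mul_unop,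
    MulOpposite.unop_op, ContinuousLinearMap.smulRight_apply, hd2Φ]
  abel

end Derivative

/-- For a unit imaginary-quaternion-valued map `Φ` (of class `C²`) on an open set `U` and a
`C¹` real-valued one-form `α`, the curvature of the connection one-form
`A = −(1/2) Φ dΦ + Φ α` is `F_A = −(1/4) dΦ ∧ dΦ + Φ dα`. -/
theorem curvature_of_abelian_connection {E : Type*} [NormedAddCommGroup E] [NormedSpace ℝ E]
    (U : Set E) (hU : IsOpen U) (Φ : E → Quaternion ℝ)
    (hΦ : ContDiffOn ℝ 2 Φ U)
    (hΦim : ∀ x ∈ U, (Φ x).re = 0) (hΦunit : ∀ x ∈ U, ‖Φ x‖ = 1)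
    (α : E → E →L[ℝ] ℝ) (hα : ContDiffOn ℝ 1 α U)
    (A : E → E → Quaternion ℝ)
    (hA : ∀ x v, A x v = -(1 / 2 : ℝ) • (Φ x * fderiv ℝ Φ x v) + (α x v) • Φ x)
    (F : E → E × E → Quaternion ℝ)
    (hF : ∀ x v w, F x (v, w) =
      fderiv ℝ (fun y => A y w) x v - fderiv ℝ (fun y => A y v) x w
        + A x v * A x w - A x w * A x v) :
    ∀ x ∈ U, ∀ v w : E,
      F x (v, w) =
        -(1 / 4 : ℝ) • (fderiv ℝ Φ x v * fderiv ℝ Φ x w - fderiv ℝ Φ x w * fderiv ℝ Φ x v)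
          + (fderiv ℝ (fun y => α y w) x v - fderiv ℝ (fun y => α y v) x w) • Φ x := by
  intro x hx v w
  obtain rfl : A = connectionForm Φ α := funext₂ hA
  have hxU : U ∈ 𝓝 x := hU.mem_nhds hx
  have hΦx : ContDiffAt ℝ 2 Φ x := hΦ.contDiffAt hxU
  have hdΦ : DifferentiableAt ℝ (fderiv ℝ Φ) x :=
    (hΦx.fderiv_right (m := 1) le_rfl).differentiableAt one_ne_zero
  have hαx : DifferentiableAt ℝ α x := (hα.contDiffAt hxU).differentiableAt one_ne_zero
  have hsq : ∀ᶠ y in 𝓝 x, Φ y * Φ y = -1 := eventually_of_mem hxU fun y hy =>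
    Quaternion.mul_self_eq_neg_one_of_re_eq_zero (hΦim y hy) (hΦunit y hy)
  have hanti := mul_fderiv_eq_neg_fderiv_mul_of_eventually_mul_self_eq
    (hΦx.differentiableAt two_ne_zero) hsq
  rw [hF, fderiv_connectionForm_apply (hΦx.differentiableAt two_ne_zero) hdΦ hαx,
    fderiv_connectionForm_apply (hΦx.differentiableAt two_ne_zero) hdΦ hαx,
    hΦx.isSymmSndFDerivAt (by simp) w v, add_sub_assoc, connectionForm, connectionForm,
    commutator_connection_values _ _ hsq.self_of_nhds (hanti v) (hanti w)]
  module
end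

section
/- Let E be a real normed vector space, U ⊆ E open, and Φ : E → ℍ differentiable on U with re(Φ x) = 0 and ‖Φ x‖ = 1 for every x ∈ U. Then for every x ∈ U and v ∈ E, Φ x * (fderiv ℝ Φ x v) = −(fderiv ℝ Φ x v) * Φ x; in other words, for a unit imaginary-quaternion–valued map, Φ dΦ = −(dΦ) Φ. -/
/-- For a unit imaginary-quaternion-valued map `Φ` on an open set `U`,
one has `Φ dΦ = −(dΦ) Φ`. -/
theorem unit_imaginary_anticommute {E : Type*} [NormedAddCommGroup E] [NormedSpace ℝ E]
    (U : Set E) (hU : IsOpen U) (Φ : E → Quaternion ℝ)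
    (hΦdiff : ∀ x ∈ U, DifferentiableAt ℝ Φ x)
    (hΦim : ∀ x ∈ U, (Φ x).re = 0) (hΦunit : ∀ x ∈ U, ‖Φ x‖ = 1) :
    ∀ x ∈ U, ∀ v : E, Φ x * fderiv ℝ Φ x v = -(fderiv ℝ Φ x v * Φ x) := by
  have hsq : ∀ x ∈ U, Φ x * Φ x = -1 := by
    intro x hx
    have hstar : star (Φ x) = -(Φ x) := Quaternion.star_eq_neg.mpr (hΦim x hx)
    have h1 : star (Φ x) * Φ x = ((Quaternion.normSq (Φ x) : ℝ) : Quaternion ℝ) :=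
      Quaternion.star_mul_self _
    have h2 : Quaternion.normSq (Φ x) = 1 := by
      rw [Quaternion.normSq_eq_norm_mul_self, hΦunit x hx]; ring
    rw [hstar, neg_mul] at h1
    rw [h2] at h1
    simpa using congrArg Neg.neg h1
  intro x hx v
  have hd := hΦdiff x hx
  have hmul : HasFDerivAt (fun y => Φ y * Φ y)
      (Φ x • fderiv ℝ Φ x + (fderiv ℝ Φ x).smulRight (Φ x)) x :=
    hd.hasFDerivAt.mul' hd.hasFDerivAt
  have heq : (fun y => Φ y * Φ y) =ᶠ[nhds x] fun _ => (-1 : Quaternion ℝ) := by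
    filter_upwards [hU.mem_nhds hx] with y hy using hsq y hy
  have hconst : HasFDerivAt (fun _ : E => (-1 : Quaternion ℝ)) 0 x := hasFDerivAt_const (𝕜 := ℝ) (-1 : Quaternion ℝ) x
  have h0 : Φ x • fderiv ℝ Φ x + (fderiv ℝ Φ x).smulRight (Φ x) = 0 := by
    have := (hconst.congr_of_eventuallyEq heq).unique hmul
    exact this.symm
  have := congrArg (fun L => L v) h0
  simp only [ContinuousLinearMap.add_apply, ContinuousLinearMap.smul_apply,
    ContinuousLinearMap.smulRight_apply, ContinuousLinearMap.zero_apply, smul_eq_mul] at this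
  linear_combination (norm := abel_nf) this
end

section
/- Let E be a real normed vector space, U ⊆ E open, and let A : E → E → ℍ be twice continuously differentiable in the first variable and linear in the second, with imaginary values. Define F : E → E → E → ℍ by F x (v, w) := fderiv ℝ (fun y => A y w) x v − fderiv ℝ (fun y => A y v) x w + (A x v)*(A x w) − (A x w)*(A x v). Then the Bianchi identity d_A F_A = 0 holds in the trivialization: for every x ∈ U and u, v, w ∈ E, (fderiv ℝ (fun y => F y (v, w)) x u + [A x u, F x (v, w)]) + (fderiv ℝ (fun y => F y (w, u)) x v + [A x v, F x (w, u)]) + (fderiv ℝ (fun y => F y (u, v)) x w + [A x w, F x (u, v)]) = 0, where [p, q] := p*q − q*p. -/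
/-!
Write `D_v = d(A(·) v)` and `D²_v` for its second derivative. Differentiating
`F(a, b) = D_b a - D_a b + A_a A_b - A_b A_a` gives `dF(c; a, b) = D²_b(c, a) - D²_a(c, b)` plus
Leibniz terms. In the cyclic sum the second-derivative terms cancel by the symmetry of second
derivatives of a `C²` map, and what remains cancels against the brackets `[A_u, F(v, w)]` by a
noncommutative ring identity.
-/

section Curvature

open ContinuousLinearMap

variable {𝕜 E R : Type*} [RCLike 𝕜] [NormedAddCommGroup E] [NormedSpace 𝕜 E]
  [NormedRing R] [NormedAlgebra 𝕜 R]

variable (𝕜) in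
noncomputable def curvature (A : E → E → R) (x v w : E) : R :=
  fderiv 𝕜 (fun y => A y w) x v - fderiv 𝕜 (fun y => A y v) x w + A x v * A x w - A x w * A x v

theorem hasFDerivAt_fderiv_apply {F : Type*} [NormedAddCommGroup F] [NormedSpace 𝕜 F]
    {f : E → F} {x : E} (hf : ContDiffAt 𝕜 2 f x) (a : E) :
    HasFDerivAt (fun y => fderiv 𝕜 f y a)
      ((apply 𝕜 F a).comp (fderiv 𝕜 (fderiv 𝕜 f) x)) x :=
  (apply 𝕜 F a).hasFDerivAt.comp x
    ((hf.fderiv_right (m := 1) le_rfl).differentiableAt one_ne_zero).hasFDerivAt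

theorem fderiv_curvature_apply {A : E → E → R} {x : E}
    (hA : ∀ v, ContDiffAt 𝕜 2 (fun y => A y v) x) (a b c : E) :
    fderiv 𝕜 (fun y => curvature 𝕜 A y a b) x c =
      fderiv 𝕜 (fderiv 𝕜 (fun y => A y b)) x c a - fderiv 𝕜 (fderiv 𝕜 (fun y => A y a)) x c b
        + (A x a * fderiv 𝕜 (fun y => A y b) x c + fderiv 𝕜 (fun y => A y a) x c * A x b)
        - (A x b * fderiv 𝕜 (fun y => A y a) x c + fderiv 𝕜 (fun y => A y b) x c * A x a) := by
  have hD : ∀ v, HasFDerivAt (fun y => A y v) (fderiv 𝕜 (fun y => A y v) x) x := fun v =>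
    ((hA v).differentiableAt two_ne_zero).hasFDerivAt
  have hF : HasFDerivAt (fun y => curvature 𝕜 A y a b) _ x :=
    (((hasFDerivAt_fderiv_apply (hA b) a).sub (hasFDerivAt_fderiv_apply (hA a) b)).add
      ((hD a).mul' (hD b))).sub ((hD b).mul' (hD a))
  rw [hF.fderiv]
  simp

theorem cyclic_sum_covariant_fderiv_curvature_eq_zero {A : E → E → R} {x : E}
    (hA : ∀ v, ContDiffAt 𝕜 2 (fun y => A y v) x) (u v w : E) :
    (fderiv 𝕜 (fun y => curvature 𝕜 A y v w) x u
        + (A x u * curvature 𝕜 A x v w - curvature 𝕜 A x v w * A x u))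
      + (fderiv 𝕜 (fun y => curvature 𝕜 A y w u) x v
        + (A x v * curvature 𝕜 A x w u - curvature 𝕜 A x w u * A x v))
      + (fderiv 𝕜 (fun y => curvature 𝕜 A y u v) x w
        + (A x w * curvature 𝕜 A x u v - curvature 𝕜 A x u v * A x w)) = 0 := by
  have hsymm : ∀ a b c : E, fderiv 𝕜 (fderiv 𝕜 (fun y => A y c)) x a b =
      fderiv 𝕜 (fderiv 𝕜 (fun y => A y c)) x b a := fun a b c =>
    (hA c).isSymmSndFDerivAt (by simp) a b
  rw [fderiv_curvature_apply hA, fderiv_curvature_apply hA, fderiv_curvature_apply hA,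
    hsymm u v w, hsymm v w u, hsymm w u v]
  unfold curvature
  noncomm_ring

end Curvature

theorem bianchi_identity_general {E : Type*} [NormedAddCommGroup E] [NormedSpace ℝ E]
    (U : Set E) (hU : IsOpen U)
    (A : E → E → Quaternion ℝ)
    (hAsmooth : ∀ v : E, ContDiffOn ℝ 2 (fun y => A y v) U)
    (F : E → E × E → Quaternion ℝ)
    (hF : ∀ x v w, F x (v, w) =
      fderiv ℝ (fun y => A y w) x v - fderiv ℝ (fun y => A y v) x w
        + A x v * A x w - A x w * A x v) :
    ∀ x ∈ U, ∀ u v w : E,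
      (fderiv ℝ (fun y => F y (v, w)) x u
          + (A x u * F x (v, w) - F x (v, w) * A x u))
        + (fderiv ℝ (fun y => F y (w, u)) x v
          + (A x v * F x (w, u) - F x (w, u) * A x v))
        + (fderiv ℝ (fun y => F y (u, v)) x w
          + (A x w * F x (u, v) - F x (u, v) * A x w)) = 0 := by
  intro x hx u v w
  obtain rfl : F = fun y p => curvature ℝ A y p.1 p.2 :=
    funext fun y => funext fun p => hF y p.1 p.2
  exact cyclic_sum_covariant_fderiv_curvature_eq_zero
    (fun v => (hAsmooth v).contDiffAt (hU.mem_nhds hx)) u v w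

/-- The Bianchi identity `d_A F_A = 0` in a trivialization: for an imaginary-quaternion-valued
connection one-form `A` (of class `C²` in the base point, linear in the direction) with
curvature `F = dA + A ∧ A`, the cyclic sum of `dF(u; v, w) + [A(u), F(v, w)]` vanishes. -/
theorem bianchi_identity {E : Type*} [NormedAddCommGroup E] [NormedSpace ℝ E]
    (U : Set E) (hU : IsOpen U)
    (A : E → E → Quaternion ℝ)
    (hAsmooth : ∀ v : E, ContDiffOn ℝ 2 (fun y => A y v) U)
    (hAlin : ∀ x, IsLinearMap ℝ (A x))
    (hAim : ∀ x v, (A x v).re = 0)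
    (F : E → E × E → Quaternion ℝ)
    (hF : ∀ x v w, F x (v, w) =
      fderiv ℝ (fun y => A y w) x v - fderiv ℝ (fun y => A y v) x w
        + A x v * A x w - A x w * A x v) :
    ∀ x ∈ U, ∀ u v w : E,
      (fderiv ℝ (fun y => F y (v, w)) x u
          + (A x u * F x (v, w) - F x (v, w) * A x u))
        + (fderiv ℝ (fun y => F y (w, u)) x v
          + (A x v * F x (w, u) - F x (w, u) * A x v))
        + (fderiv ℝ (fun y => F y (u, v)) x w
          + (A x w * F x (u, v) - F x (u, v) * A x w)) = 0 :=
  bianchi_identity_general U hU A hAsmooth F hF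
end

section
/- Let E be a real normed vector space, U ⊆ E open, and Φ : E → ℍ differentiable at a point x ∈ U with imaginary values on U (re(Φ y) = 0 for all y ∈ U) and Φ x ≠ 0. Then the function y ↦ ‖Φ y‖ is differentiable at x, and for every imaginary quaternion a (re a = 0) and every v ∈ E: |fderiv ℝ (fun y => ‖Φ y‖) x v| ≤ ‖fderiv ℝ Φ x v + a * Φ x − Φ x * a‖. In particular, |d|Φ|| ≤ |d_AΦ| pointwise for any su(2)-valued connection one-form A. -/
/-!
The derivative of `‖Φ‖` at a point where `Φ ≠ 0` is `v ↦ ⟪Φ, dΦ v⟫ / ‖Φ‖`. The commutator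
`[a, Φ]` is orthogonal to `Φ`, so `⟪Φ, dΦ v⟫ = ⟪Φ, dΦ v + [a, Φ]⟫`, and Cauchy–Schwarz bounds
this by `‖Φ‖ ‖dΦ v + [a, Φ]‖`.
-/

open scoped RealInnerProductSpace

/-- `a * p - p * a` is twice the cross product of the imaginary parts of `a` and `p`. -/
theorem Quaternion.inner_self_commutator_eq_zero (a p : Quaternion ℝ) :
    ⟪p, a * p - p * a⟫ = 0 := by
  simp only [Quaternion.inner_def, star_sub, star_mul, mul_sub, Quaternion.re_sub,
    Quaternion.re_mul, Quaternion.re_star, Quaternion.imI_star, Quaternion.imJ_star,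
    Quaternion.imK_star, Quaternion.imI_mul, Quaternion.imJ_mul, Quaternion.imK_mul]
  ring

section

variable {E F : Type*} [NormedAddCommGroup E] [NormedSpace ℝ E]
  [NormedAddCommGroup F] [InnerProductSpace ℝ F] {f : E → F} {f' : E →L[ℝ] F} {x : E}

theorem HasFDerivAt.norm (hf : HasFDerivAt f f' x) (h0 : f x ≠ 0) :
    HasFDerivAt (fun y => ‖f y‖) (‖f x‖⁻¹ • (innerSL ℝ (f x)).comp f') x := by
  have hsqrt := hf.norm_sq.sqrt (pow_ne_zero 2 (norm_ne_zero_iff.2 h0))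
  simp only [Real.sqrt_sq (norm_nonneg _)] at hsqrt
  convert hsqrt using 1
  ext v
  simp only [smul_apply, ContinuousLinearMap.comp_apply, coe_innerSL_apply,
    smul_eq_mul, nsmul_eq_mul, Nat.cast_ofNat]
  field_simp

theorem abs_fderiv_norm_apply_le_of_inner_eq (hf : DifferentiableAt ℝ f x) (h0 : f x ≠ 0)
    (v : E) {w : F} (hw : ⟪f x, w⟫ = ⟪f x, fderiv ℝ f x v⟫) :
    |fderiv ℝ (fun y => ‖f y‖) x v| ≤ ‖w‖ := by
  have hpos : 0 < ‖f x‖ := norm_pos_iff.2 h0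
  rw [(hf.hasFDerivAt.norm h0).fderiv]
  calc |(‖f x‖⁻¹ • (innerSL ℝ (f x)).comp (fderiv ℝ f x)) v| = ‖f x‖⁻¹ * |⟪f x, w⟫| := by
        simp [hw, abs_mul]
    _ ≤ ‖f x‖⁻¹ * (‖f x‖ * ‖w‖) := by gcongr; exact abs_real_inner_le_norm _ _
    _ = ‖w‖ := by field_simp

end

theorem norm_deriv_le_covariant_deriv_general {E : Type*} [NormedAddCommGroup E] [NormedSpace ℝ E]
    (x : E)
    (Φ : E → Quaternion ℝ) (hΦ : DifferentiableAt ℝ Φ x)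
    (hne : Φ x ≠ 0) :
    DifferentiableAt ℝ (fun y => ‖Φ y‖) x ∧
    ∀ a : Quaternion ℝ, a.re = 0 → ∀ v : E,
      |fderiv ℝ (fun y => ‖Φ y‖) x v| ≤ ‖fderiv ℝ Φ x v + a * Φ x - Φ x * a‖ := by
  refine ⟨hΦ.norm ℝ hne, fun a _ v => abs_fderiv_norm_apply_le_of_inner_eq hΦ hne v ?_⟩
  rw [add_sub_assoc, inner_add_right, Quaternion.inner_self_commutator_eq_zero, add_zero]

/-- Pointwise bound `|d|Φ|| ≤ |d_AΦ|`: if `Φ` is imaginary-quaternion-valued on an open set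
`U`, differentiable at `x ∈ U` with `Φ x ≠ 0`, then `‖Φ ·‖` is differentiable at `x`, and
for any imaginary quaternion `a` (the value `A(v)` of a connection one-form) and any
direction `v`, `|d‖Φ‖(v)| ≤ ‖dΦ(v) + [a, Φ x]‖`. -/
theorem norm_deriv_le_covariant_deriv {E : Type*} [NormedAddCommGroup E] [NormedSpace ℝ E]
    (U : Set E) (hU : IsOpen U) (x : E) (hx : x ∈ U)
    (Φ : E → Quaternion ℝ) (hΦ : DifferentiableAt ℝ Φ x)
    (hΦim : ∀ y ∈ U, (Φ y).re = 0) (hne : Φ x ≠ 0) :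
    DifferentiableAt ℝ (fun y => ‖Φ y‖) x ∧
    ∀ a : Quaternion ℝ, a.re = 0 → ∀ v : E,
      |fderiv ℝ (fun y => ‖Φ y‖) x v| ≤ ‖fderiv ℝ Φ x v + a * Φ x - Φ x * a‖ :=
  norm_deriv_le_covariant_deriv_general x Φ hΦ hne
end

section
/- Let U ⊆ EuclideanSpace ℝ (Fin n) be open, let Φ : U → ℍ be twice continuously differentiable with imaginary values, and let A_1, …, A_n : U → ℍ be continuously differentiable with imaginary values (the components of a connection one-form in the standard coordinates). Define the covariant derivative components (d_AΦ)_i x := ∂_i Φ x + (A_i x)*(Φ x) − (Φ x)*(A_i x), where ∂_i is the partial derivative in the i-th coordinate direction. Suppose Φ satisfies the Yang–Mills–Higgs section equation d_A^* d_A Φ = 0, i.e. for every x ∈ U: ∑_{i=1}^n ( ∂_i((d_AΦ)_i) x + (A_i x)*((d_AΦ)_i x) − ((d_AΦ)_i x)*(A_i x) ) = 0. Then for every x ∈ U: ∑_{i=1}^n ∂_i ∂_i (fun y => ‖Φ y‖^2) x = 2 ∑_{i=1}^n ‖(d_AΦ)_i x‖^2; equivalently, d^* d (1 − |Φ|^2)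 = 2 |d_AΦ|^2. -/
/-!
For every quaternion `b`, `⟪⁅b, q⁆, q⟫ = 0`, and for imaginary `a` the map `⁅a, ·⁆` is skew for the
inner product. Hence the covariant derivative `∇ᵥ = ∂ᵥ + ⁅A, ·⁆` is metric:
`∂ᵥ⟪f, g⟫ = ⟪∇ᵥ f, g⟫ + ⟪f, ∇ᵥ g⟫`, and `∂ᵥ‖Φ‖² = 2⟪∇ᵥΦ, Φ⟫`. Differentiating once more gives
`∂ᵥ∂ᵥ‖Φ‖² = 2 (⟪∇ᵥ∇ᵥΦ, Φ⟫ + ‖∇ᵥΦ‖²)`; summed over the coordinate directions, the first term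
vanishes by the section equation.
-/

open scoped RealInnerProductSpace Quaternion
open Filter Topology

namespace Quaternion

theorem inner_lie_self (b q : ℍ[ℝ]) : ⟪⁅b, q⁆, q⟫ = 0 := by
  simp only [Ring.lie_def, inner_def, re_mul, re_sub, imI_mul, imJ_mul, imK_mul, imI_sub,
    imJ_sub, imK_sub, re_star, imI_star, imJ_star, imK_star]
  ring

theorem inner_lie_left {a : ℍ[ℝ]} (ha : a.re = 0) (p q : ℍ[ℝ]) :
    ⟪⁅a, p⁆, q⟫ = -⟪p, ⁅a, q⁆⟫ := by
  simp only [Ring.lie_def, inner_def, re_mul, re_sub, imI_mul, imJ_mul, imK_mul, imI_sub,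
    imJ_sub, imK_sub, re_star, imI_star, imJ_star, imK_star, star_sub, star_mul, ha]
  ring

end Quaternion

section

variable {E : Type*} [NormedAddCommGroup E] [NormedSpace ℝ E]

theorem fderiv_norm_sq_apply_eq_inner {F : Type*} [NormedAddCommGroup F] [InnerProductSpace ℝ F]
    {f : E → F} {x : E} (hf : DifferentiableAt ℝ f x) (v : E) :
    fderiv ℝ (fun y => ‖f y‖ ^ 2) x v = 2 * ⟪fderiv ℝ f x v, f x⟫ := by
  simp [hf.hasFDerivAt.norm_sq.fderiv, real_inner_comm]

theorem DifferentiableAt.lie {𝔸 : Type*} [NormedRing 𝔸] [NormedAlgebra ℝ 𝔸] {f g : E → 𝔸} {x : E}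
    (hf : DifferentiableAt ℝ f x) (hg : DifferentiableAt ℝ g x) :
    DifferentiableAt ℝ (fun y => ⁅f y, g y⁆) x := by
  simp only [Ring.lie_def]
  exact (hf.mul hg).sub (hg.mul hf)

namespace Quaternion

theorem fderiv_inner_apply_eq_inner_add_lie {f g : E → ℍ[ℝ]} {x : E}
    (hf : DifferentiableAt ℝ f x) (hg : DifferentiableAt ℝ g x) {a : ℍ[ℝ]} (ha : a.re = 0)
    (v : E) :
    fderiv ℝ (fun y => ⟪f y, g y⟫) x v
      = ⟪fderiv ℝ f x v + ⁅a, f x⁆, g x⟫ + ⟪f x, fderiv ℝ g x v + ⁅a, g x⁆⟫ := by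
  rw [fderiv_inner_apply ℝ hf hg, inner_add_left, inner_add_right, inner_lie_left ha]
  ring

theorem fderiv_fderiv_norm_sq_eq {Φ A D : E → ℍ[ℝ]} {x v : E}
    (hΦ : ∀ᶠ y in 𝓝 x, DifferentiableAt ℝ Φ y)
    (hΦ' : DifferentiableAt ℝ (fun y => fderiv ℝ Φ y v) x)
    (hA : DifferentiableAt ℝ A x) (hAim : (A x).re = 0)
    (hD : ∀ y, D y = fderiv ℝ Φ y v + A y * Φ y - Φ y * A y) :
    fderiv ℝ (fun y => fderiv ℝ (fun z => ‖Φ z‖ ^ 2) y v) x v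
      = 2 * (⟪fderiv ℝ D x v + A x * D x - D x * A x, Φ x⟫ + ‖D x‖ ^ 2) := by
  have hD_lie : D = fun y => fderiv ℝ Φ y v + ⁅A y, Φ y⁆ := by
    funext y
    rw [hD, Ring.lie_def, add_sub_assoc]
  have hΦx : DifferentiableAt ℝ Φ x := hΦ.self_of_nhds
  have hDx : DifferentiableAt ℝ D x := hD_lie ▸ hΦ'.add (hA.lie hΦx)
  have hfirst : (fun y => fderiv ℝ (fun z => ‖Φ z‖ ^ 2) y v) =ᶠ[𝓝 x] fun y => 2 * ⟪D y, Φ y⟫ := by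
    filter_upwards [hΦ] with y hy
    rw [fderiv_norm_sq_apply_eq_inner hy, hD_lie, inner_add_left, inner_lie_self, add_zero]
  rw [hfirst.fderiv_eq, fderiv_const_mul (hDx.inner ℝ hΦx), smul_apply,
    smul_eq_mul, fderiv_inner_apply_eq_inner_add_lie hDx hΦx hAim, ← congrFun hD_lie x,
    real_inner_self_eq_norm_sq, Ring.lie_def, add_sub_assoc]

end Quaternion

end

theorem laplacian_norm_sq_of_harmonic_section_general {n : ℕ}
    (U : Set (EuclideanSpace ℝ (Fin n))) (hU : IsOpen U)
    (Φ : EuclideanSpace ℝ (Fin n) → Quaternion ℝ)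
    (hΦ : ContDiffOn ℝ 2 Φ U)
    (A : Fin n → EuclideanSpace ℝ (Fin n) → Quaternion ℝ)
    (hA : ∀ i, ContDiffOn ℝ 1 (A i) U)
    (hAim : ∀ i, ∀ x ∈ U, (A i x).re = 0)
    (dAΦ : Fin n → EuclideanSpace ℝ (Fin n) → Quaternion ℝ)
    (hdAΦ : ∀ i x, dAΦ i x =
      fderiv ℝ Φ x (EuclideanSpace.single i (1 : ℝ))
        + A i x * Φ x - Φ x * A i x)
    (hharm : ∀ x ∈ U,
      ∑ i : Fin n,
        (fderiv ℝ (dAΦ i) x (EuclideanSpace.single i (1 : ℝ))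
          + A i x * dAΦ i x - dAΦ i x * A i x) = 0) :
    ∀ x ∈ U,
      ∑ i : Fin n,
        fderiv ℝ (fun y => fderiv ℝ (fun z => ‖Φ z‖ ^ 2) y (EuclideanSpace.single i (1 : ℝ)))
          x (EuclideanSpace.single i (1 : ℝ))
      = 2 * ∑ i : Fin n, ‖dAΦ i x‖ ^ 2 := by
  intro x hx
  have hUx : U ∈ 𝓝 x := hU.mem_nhds hx
  have hΦ_diff : ∀ᶠ y in 𝓝 x, DifferentiableAt ℝ Φ y := by
    filter_upwards [hUx] with y hy
    exact (hΦ.differentiableOn two_ne_zero).differentiableAt (hU.mem_nhds hy)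
  have hΦ'_diff : ∀ v, DifferentiableAt ℝ (fun y => fderiv ℝ Φ y v) x := fun v =>
    (((hΦ.fderiv_of_isOpen hU le_rfl).clm_apply contDiffOn_const).differentiableOn
      one_ne_zero).differentiableAt hUx
  have hA_diff : ∀ i, DifferentiableAt ℝ (A i) x := fun i =>
    ((hA i).differentiableOn one_ne_zero).differentiableAt hUx
  simp_rw [Quaternion.fderiv_fderiv_norm_sq_eq hΦ_diff (hΦ'_diff _) (hA_diff _) (hAim _ x hx)
    (hdAΦ _), ← Finset.mul_sum, Finset.sum_add_distrib, ← sum_inner, hharm x hx,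
    inner_zero_left, zero_add]

/-- If `Φ` solves the Yang–Mills–Higgs section equation `d_A^* d_A Φ = 0` on an open set
`U ⊆ ℝⁿ`, then `Δ|Φ|² = 2|d_AΦ|²`, i.e. `d^*d(1 − |Φ|²) = 2|d_AΦ|²`, written
componentwise with `∂ᵢ` the partial derivatives along the standard basis vectors. -/
theorem laplacian_norm_sq_of_harmonic_section {n : ℕ}
    (U : Set (EuclideanSpace ℝ (Fin n))) (hU : IsOpen U)
    (Φ : EuclideanSpace ℝ (Fin n) → Quaternion ℝ)
    (hΦ : ContDiffOn ℝ 2 Φ U) (hΦim : ∀ x ∈ U, (Φ x).re = 0)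
    (A : Fin n → EuclideanSpace ℝ (Fin n) → Quaternion ℝ)
    (hA : ∀ i, ContDiffOn ℝ 1 (A i) U)
    (hAim : ∀ i, ∀ x ∈ U, (A i x).re = 0)
    (dAΦ : Fin n → EuclideanSpace ℝ (Fin n) → Quaternion ℝ)
    (hdAΦ : ∀ i x, dAΦ i x =
      fderiv ℝ Φ x (EuclideanSpace.single i (1 : ℝ))
        + A i x * Φ x - Φ x * A i x)
    (hharm : ∀ x ∈ U,
      ∑ i : Fin n,
        (fderiv ℝ (dAΦ i) x (EuclideanSpace.single i (1 : ℝ))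
          + A i x * dAΦ i x - dAΦ i x * A i x) = 0) :
    ∀ x ∈ U,
      ∑ i : Fin n,
        fderiv ℝ (fun y => fderiv ℝ (fun z => ‖Φ z‖ ^ 2) y (EuclideanSpace.single i (1 : ℝ)))
          x (EuclideanSpace.single i (1 : ℝ))
      = 2 * ∑ i : Fin n, ‖dAΦ i x‖ ^ 2 :=
  laplacian_norm_sq_of_harmonic_section_general U hU Φ hΦ A hA hAim dAΦ hdAΦ hharm
end
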